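/- arXiv:2511.19828 — 3 statements merged into one kernel-verified Lean document; each statement's English description precedes it below -/
import Mathlib

section
/- Let S_X, S_Y be finite nonempty sets, φ : S_X × S_Y → ℝ extended linearly to mixed actions, λ ∈ (0,1), and suppose τ⁺, τ⁻ ∈ Δ(S_X) satisfy the two-point inequalities with strict separation m⁺ := min_{s_Y} φ(τ⁺,s_Y) > M⁻ := max_{s_Y} φ(τ⁻,s_Y). Then λ ≥ 1 − (m⁺ − M⁻) / max{ M⁺ − M⁻, m⁺ − m⁻ }, where M⁺ := max_{s_Y} φ(τ⁺,s_Y) and m⁻ := min_{s_Y} φ(τ⁻,s_Y). -/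
noncomputable def maxY {SY : Type*} [Fintype SY] [Nonempty SY] (f : SY → ℝ) : ℝ :=
  Finset.univ.sup' Finset.univ_nonempty f

noncomputable def minY {SY : Type*} [Fintype SY] [Nonempty SY] (f : SY → ℝ) : ℝ :=
  Finset.univ.inf' Finset.univ_nonempty f

def simplex (SX : Type*) [Fintype SX] : Set (SX → ℝ) :=
  {τ | (∀ s, 0 ≤ τ s) ∧ ∑ s, τ s = 1}

noncomputable def mix {SX SY : Type*} [Fintype SX] (φ : SX → SY → ℝ) (τ : SX → ℝ)
    (sY : SY) : ℝ :=
  ∑ s, τ s * φ s sY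

/-!
Write `m⁺, M⁺, m⁻, M⁻` for the four extreme payoffs. The two-point inequalities rearrange to
`(1 - λ)(M⁺ - M⁻) ≤ m⁺ - M⁻` and `(1 - λ)(m⁺ - m⁻) ≤ m⁺ - M⁻`, so `(1 - λ)` times their maximum is
at most `m⁺ - M⁻`. Strict separation together with `m⁺ ≤ M⁺` makes that maximum positive, and
dividing by it gives the bound.
-/

theorem minY_le_maxY {SY : Type*} [Fintype SY] [Nonempty SY] (f : SY → ℝ) : minY f ≤ maxY f :=
  (Finset.inf'_le f (Finset.mem_univ (Classical.arbitrary SY))).trans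
    (Finset.le_sup' f (Finset.mem_univ (Classical.arbitrary SY)))

theorem one_sub_div_max_le_of_mul_le {lam a b c : ℝ} (hpos : 0 < max a b)
    (ha : (1 - lam) * a ≤ c) (hb : (1 - lam) * b ≤ c) : 1 - c / max a b ≤ lam := by
  have hmax : (1 - lam) * max a b ≤ c := by
    rcases max_choice a b with h | h <;> rwa [h]
  rwa [sub_le_comm, le_div_iff₀ hpos]

theorem stmt_3_general {SX SY : Type*} [Fintype SX] [Fintype SY] [Nonempty SY]
    (φ : SX → SY → ℝ) (lam : ℝ) (τp τm : SX → ℝ)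
    (hsep : minY (mix φ τp) > maxY (mix φ τm))
    (hi : minY (mix φ τp) ≥ (1 - lam) * maxY (mix φ τp) + lam * maxY (mix φ τm))
    (hii : maxY (mix φ τm) ≤ lam * minY (mix φ τp) + (1 - lam) * minY (mix φ τm)) :
    lam ≥ 1 - (minY (mix φ τp) - maxY (mix φ τm)) /
      max (maxY (mix φ τp) - maxY (mix φ τm)) (minY (mix φ τp) - minY (mix φ τm)) := by
  have hpos : 0 < max (maxY (mix φ τp) - maxY (mix φ τm)) (minY (mix φ τp) - minY (mix φ τm)) :=
    lt_max_of_lt_left (sub_pos.2 (hsep.trans_le (minY_le_maxY _)))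
  exact one_sub_div_max_le_of_mul_le hpos (by linarith) (by linarith)

/-- lower bound on the discount factor from the two-point inequalities
with strict separation. -/
theorem stmt_3 {SX SY : Type*} [Fintype SX] [Fintype SY] [Nonempty SX] [Nonempty SY]
    (φ : SX → SY → ℝ) (lam : ℝ) (h0 : 0 < lam) (h1 : lam < 1)
    (τp τm : SX → ℝ) (hτp : τp ∈ simplex SX) (hτm : τm ∈ simplex SX)
    (hsep : minY (mix φ τp) > maxY (mix φ τm))
    (hi : minY (mix φ τp) ≥ (1 - lam) * maxY (mix φ τp) + lam * maxY (mix φ τm))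
    (hii : maxY (mix φ τm) ≤ lam * minY (mix φ τp) + (1 - lam) * minY (mix φ τm)) :
    lam ≥ 1 - (minY (mix φ τp) - maxY (mix φ τm)) /
      max (maxY (mix φ τp) - maxY (mix φ τm)) (minY (mix φ τp) - minY (mix φ τm)) :=
  stmt_3_general φ lam τp τm hsep hi hii
end

section
/- Let S_X, S_Y be finite sets and suppose φ : S_X × S_Y → ℝ is additive: φ(s_X, s_Y) = φ_X(s_X) + φ_Y(s_Y). Let λ ∈ [0,1), σ⁰ ∈ Δ(S_X), and for each s_Y let σ[s_Y] ∈ Δ(S_X) satisfy φ_Y(s_Y) = −λ·E_{s∼σ[s_Y]}[φ_X(s)] − (1−λ)·E_{s∼σ⁰}[φ_X(s)]. Then for any sequence (s_Y^t)_{t≥0} in S_Y, the strategy playing σ⁰ at round 0 and σ[s_Y^{t−1}] at round t ≥ 1 satisfies (1−λ)·∑_{t=0}^∞ λ^t φ(τ^t, s_Y^t) = 0, where τ^0 = σ⁰ and τ^t = σ[s_Y^{t−1}], and φ(τ, s_Y) := E_{s∼τ}[φ(s, s_Y)]. -/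
/-
With `E t = ∑ s, τ t s * φX s`, the correction condition reads
`φY (sY t) = -lam * E (t + 1) - (1 - lam) * E 0`, so the `t`-th term of the series is
`(1 - lam) * (lam ^ t * E t - lam ^ (t + 1) * E (t + 1)) - (1 - lam) ^ 2 * lam ^ t * E 0`.
The first part telescopes to `(1 - lam) * E 0` (the discounted sequence is summable because
expectations under mixed strategies are bounded), and the geometric second part has the same sum.
-/

theorem sum_mul_add_const_of_mem_simplex {SX : Type*} [Fintype SX] {τ : SX → ℝ}
    (hτ : τ ∈ simplex SX) (f : SX → ℝ) (c : ℝ) :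
    ∑ s, τ s * (f s + c) = ∑ s, τ s * f s + c := by
  simp only [mul_add, Finset.sum_add_distrib, ← Finset.sum_mul, hτ.2, one_mul]

theorem abs_sum_mul_le_of_mem_simplex {SX : Type*} [Fintype SX] {τ : SX → ℝ}
    (hτ : τ ∈ simplex SX) (f : SX → ℝ) :
    |∑ s, τ s * f s| ≤ ∑ s, |f s| := by
  obtain ⟨hnonneg, hsum⟩ := hτ
  have hle_one : ∀ s, τ s ≤ 1 := fun s =>
    hsum ▸ Finset.single_le_sum (fun i _ => hnonneg i) (Finset.mem_univ s)
  calc |∑ s, τ s * f s| ≤ ∑ s, |τ s * f s| := Finset.abs_sum_le_sum_abs _ _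
    _ = ∑ s, τ s * |f s| := by simp only [abs_mul, abs_of_nonneg (hnonneg _)]
    _ ≤ ∑ s, |f s| :=
      Finset.sum_le_sum fun s _ => mul_le_of_le_one_left (abs_nonneg _) (hle_one s)

theorem summable_pow_mul_of_abs_le {lam C : ℝ} {E : ℕ → ℝ} (h0 : 0 ≤ lam) (h1 : lam < 1)
    (hE : ∀ t, |E t| ≤ C) : Summable fun t => lam ^ t * E t := by
  refine ((summable_geometric_of_lt_one h0 h1).mul_right C).of_norm_bounded fun t => ?_
  rw [Real.norm_eq_abs, abs_mul, abs_pow, abs_of_nonneg h0]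
  exact mul_le_mul_of_nonneg_left (hE t) (pow_nonneg h0 t)

theorem Summable.hasSum_sub_succ {G : Type*} [AddCommGroup G] [TopologicalSpace G]
    [IsTopologicalAddGroup G] {f : ℕ → G} (hf : Summable f) :
    HasSum (fun t => f t - f (t + 1)) (f 0) := by
  simpa using hf.hasSum.sub ((hasSum_nat_add_iff' 1).2 hf.hasSum)

theorem stmt_8_general {SX SY : Type*} [Fintype SX]
    (φX : SX → ℝ) (φY : SY → ℝ) (lam : ℝ) (h0 : 0 ≤ lam) (h1 : lam < 1)
    (σ0 : SX → ℝ) (hσ0 : σ0 ∈ simplex SX)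
    (σ : SY → SX → ℝ) (hσ : ∀ sY, σ sY ∈ simplex SX)
    (hcond : ∀ sY, φY sY =
      -lam * (∑ s, σ sY s * φX s) - (1 - lam) * (∑ s, σ0 s * φX s))
    (sY : ℕ → SY) (τ : ℕ → SX → ℝ) (hτ0 : τ 0 = σ0) (hτ : ∀ t, τ (t + 1) = σ (sY t)) :
    HasSum (fun t : ℕ => (1 - lam) * (lam ^ t * ∑ s, τ t s * (φX s + φY (sY t)))) 0 := by
  set E : ℕ → ℝ := fun t => ∑ s, τ t s * φX s
  have hτ_mem : ∀ t, τ t ∈ simplex SX := by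
    rintro (_ | t)
    · exact hτ0 ▸ hσ0
    · exact hτ t ▸ hσ (sY t)
  have hdiscounted : Summable fun t => lam ^ t * E t :=
    summable_pow_mul_of_abs_le h0 h1 fun t => abs_sum_mul_le_of_mem_simplex (hτ_mem t) φX
  have htelescope := hdiscounted.hasSum_sub_succ.mul_left (1 - lam)
  have hgeometric := (hasSum_geometric_of_lt_one h0 h1).mul_left ((1 - lam) ^ 2 * E 0)
  have hsum := htelescope.sub hgeometric
  rw [show (1 - lam) * (lam ^ 0 * E 0) - (1 - lam) ^ 2 * E 0 * (1 - lam)⁻¹ = 0 by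
    field_simp [(sub_pos.2 h1).ne']; ring] at hsum
  refine hsum.congr_fun fun t => ?_
  have hφY : φY (sY t) = -lam * E (t + 1) - (1 - lam) * E 0 := by
    simp only [E, hcond, hτ, hτ0]
  rw [sum_mul_add_const_of_mem_simplex (hτ_mem t), hφY]
  ring

/-- for additive φ, the pointwise next-round correction condition for a
reactive strategy enforces the discounted constraint against every exogenous sequence. -/
theorem stmt_8 {SX SY : Type*} [Fintype SX] [Nonempty SX]
    (φX : SX → ℝ) (φY : SY → ℝ) (lam : ℝ) (h0 : 0 ≤ lam) (h1 : lam < 1)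
    (σ0 : SX → ℝ) (hσ0 : σ0 ∈ simplex SX)
    (σ : SY → SX → ℝ) (hσ : ∀ sY, σ sY ∈ simplex SX)
    (hcond : ∀ sY, φY sY =
      -lam * (∑ s, σ sY s * φX s) - (1 - lam) * (∑ s, σ0 s * φX s))
    (sY : ℕ → SY) (τ : ℕ → SX → ℝ) (hτ0 : τ 0 = σ0) (hτ : ∀ t, τ (t + 1) = σ (sY t)) :
    HasSum (fun t : ℕ => (1 - lam) * (lam ^ t * ∑ s, τ t s * (φX s + φY (sY t)))) 0 :=
  stmt_8_general φX φY lam h0 h1 σ0 hσ0 σ hσ hcond sY τ hτ0 hτ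
end

section
/- Let S_X, S_Y be finite sets and φ(s_X, s_Y) = φ_X(s_X) + φ_Y(s_Y) be additive with φ_X non-constant. If there exist τ⁺, τ⁻ ∈ Δ(S_X) and λ ∈ [0,1) satisfying the two-point enforcement inequalities for φ, then λ ≥ (max_{s_Y} φ_Y(s_Y) − min_{s_Y} φ_Y(s_Y)) / (max_{s_X} φ_X(s_X) − min_{s_X} φ_X(s_X)). -/
/-! For additive `φ`, the profile `s_Y ↦ φ(τ, s_Y)` is `φ_Y` shifted by the mean `E_τ φ_X`.
The first enforcement inequality therefore reads
`max φ_Y - min φ_Y ≤ λ (E_{τ⁺} φ_X - E_{τ⁻} φ_X)`, and a difference of two means of `φ_X`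
is at most `max φ_X - min φ_X`. -/

section Extrema

variable {ι : Type*} [Fintype ι] [Nonempty ι]

lemma maxY_const_add (c : ℝ) (f : ι → ℝ) : maxY (fun i => c + f i) = c + maxY f :=
  (Finset.add_sup' _ _ _ _).symm

lemma minY_const_add (c : ℝ) (f : ι → ℝ) : minY (fun i => c + f i) = c + minY f :=
  (map_finset_inf' (OrderIso.addLeft c) _ f).symm

lemma minY_le_maxY_s9 (f : ι → ℝ) : minY f ≤ maxY f :=
  (Finset.inf'_le f (Finset.mem_univ (Classical.arbitrary ι))).trans
    (Finset.le_sup' f (Finset.mem_univ _))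

end Extrema

section Simplex

variable {SX : Type*} [Fintype SX] {τ : SX → ℝ}

lemma sum_mul_le_maxY [Nonempty SX] (hτ : τ ∈ simplex SX) (f : SX → ℝ) :
    ∑ s, τ s * f s ≤ maxY f :=
  calc ∑ s, τ s * f s ≤ ∑ s, τ s * maxY f :=
        Finset.sum_le_sum fun s _ =>
          mul_le_mul_of_nonneg_left (Finset.le_sup' f (Finset.mem_univ s)) (hτ.1 s)
    _ = maxY f := by rw [← Finset.sum_mul, hτ.2, one_mul]

lemma minY_le_sum_mul [Nonempty SX] (hτ : τ ∈ simplex SX) (f : SX → ℝ) :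
    minY f ≤ ∑ s, τ s * f s :=
  calc minY f = ∑ s, τ s * minY f := by rw [← Finset.sum_mul, hτ.2, one_mul]
    _ ≤ ∑ s, τ s * f s :=
        Finset.sum_le_sum fun s _ =>
          mul_le_mul_of_nonneg_left (Finset.inf'_le f (Finset.mem_univ s)) (hτ.1 s)

lemma mix_add {SY : Type*} (hτ : τ ∈ simplex SX) (φX : SX → ℝ) (φY : SY → ℝ) :
    mix (fun s t => φX s + φY t) τ = fun t => (∑ s, τ s * φX s) + φY t := by
  ext t
  simp only [mix, mul_add, Finset.sum_add_distrib, ← Finset.sum_mul, hτ.2, one_mul]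

end Simplex

theorem stmt_9_general {SX SY : Type*} [Fintype SX] [Fintype SY] [Nonempty SX] [Nonempty SY]
    (φX : SX → ℝ) (φY : SY → ℝ)
    (lam : ℝ) (h0 : 0 ≤ lam)
    (τp τm : SX → ℝ) (hτp : τp ∈ simplex SX) (hτm : τm ∈ simplex SX)
    (hi : minY (mix (fun s t => φX s + φY t) τp) ≥
      (1 - lam) * maxY (mix (fun s t => φX s + φY t) τp) +
        lam * maxY (mix (fun s t => φX s + φY t) τm)) :
    lam ≥ (maxY φY - minY φY) / (maxY φX - minY φX) := by
  rw [mix_add hτp, mix_add hτm, minY_const_add, maxY_const_add, maxY_const_add] at hi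
  set meanP := ∑ s, τp s * φX s
  set meanM := ∑ s, τm s * φX s
  have hspread : meanP - meanM ≤ maxY φX - minY φX := by
    linarith [sum_mul_le_maxY hτp φX, minY_le_sum_mul hτm φX]
  refine div_le_of_le_mul₀ (sub_nonneg.2 (minY_le_maxY_s9 φX)) h0 ?_
  calc maxY φY - minY φY ≤ lam * (meanP - meanM) := by linarith
    _ ≤ lam * (maxY φX - minY φX) := by gcongr

/-- minimum discount factor for additive objective functions. -/
theorem stmt_9 {SX SY : Type*} [Fintype SX] [Fintype SY] [Nonempty SX] [Nonempty SY]
    (φX : SX → ℝ) (φY : SY → ℝ) (hnc : ∃ a b, φX a ≠ φX b)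
    (lam : ℝ) (h0 : 0 ≤ lam) (h1 : lam < 1)
    (τp τm : SX → ℝ) (hτp : τp ∈ simplex SX) (hτm : τm ∈ simplex SX)
    (hi : minY (mix (fun s t => φX s + φY t) τp) ≥
      (1 - lam) * maxY (mix (fun s t => φX s + φY t) τp) +
        lam * maxY (mix (fun s t => φX s + φY t) τm))
    (hii : maxY (mix (fun s t => φX s + φY t) τm) ≤
      lam * minY (mix (fun s t => φX s + φY t) τp) +
        (1 - lam) * minY (mix (fun s t => φX s + φY t) τm)) :
    lam ≥ (maxY φY - minY φY) / (maxY φX - minY φX) :=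
  stmt_9_general φX φY lam h0 τp τm hτp hτm hi
end
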